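/- Both deficiency indices of $T$ are infinite: the subspaces $\ker(T^* - i\,\mathrm{id}) = \{ g \in D(T^*) : T^* g = i g \}$ and $\ker(T^* + i\,\mathrm{id}) = \{ g \in D(T^*) : T^* g = -i g \}$ are both infinite-dimensional complex subspaces of $\ell^2(\mathbb{N}\times\mathbb{N};\mathbb{C})$. In particular, $T$ is not essentially self-adjoint. -/

import Mathlib

noncomputable section

/-- The Hilbert space `ℓ²(ℕ×ℕ; ℂ)`. -/
abbrev H2 : Type := lp (fun _ : ℕ × ℕ => ℂ) 2

/-- `β(m,n) = (1/2)·√(m+1)·(1-m-n)`. -/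
def beta (m n : ℕ) : ℝ := (1 / 2) * Real.sqrt ((m : ℝ) + 1) * (1 - (m : ℝ) - (n : ℝ))

/-- The formal Jacobi-type action
`(T g)(m,n) = β(m,n) g(m+1,n) + β(m-1,n) g(m-1,n)`, with the convention `β(-1,n) = 0`. -/
def jacobiAct (g : ℕ × ℕ → ℂ) : ℕ × ℕ → ℂ := fun p =>
  (beta p.1 p.2 : ℂ) * g (p.1 + 1, p.2) +
    (if p.1 = 0 then 0 else (beta (p.1 - 1) p.2 : ℂ) * g (p.1 - 1, p.2))

/-!
In the basis of Hermite–Gaussian modes `T` preserves every column `{(m, n) | m ∈ ℕ}` and acts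
on it as a Jacobi matrix with zero diagonal and off-diagonal entries `β(m, n)`. For `n ≥ 2`
these entries never vanish, so `T* g = z g` has in column `n` a solution with `g (0, n) = 1`,
given by the three-term recursion. As `|β(m, n)|` grows like `m ^ (3/2)`, is log-concave in `m`
and has summable reciprocals, a discrete Gronwall argument bounds `√|β(m, n)| · |g (m, n)|`, so
`|g (m, n)|² = O(1 / |β(m, n)|)` is summable. For `z = ±i` this gives one eigenvector of `T*`
per column `n ≥ 2`, and these are pairwise orthogonal. Finally `T*` is also the adjoint of the
closure of `T`, so if that closure were self-adjoint it would equal `T*`, and a self-adjoint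
operator has no eigenvalue `i`.
-/

open Function
open scoped ComplexConjugate ENNReal InnerProductSpace LinearPMap

theorem exists_forall_le_of_le_add_mul {y ε : ℕ → ℝ} (hy : ∀ m, 0 ≤ y m) (hε : ∀ m, 0 ≤ ε m)
    (hεs : Summable ε) (hrec : ∀ m, y (m + 2) ≤ y m + ε m * y (m + 1)) :
    ∃ C, ∀ m, y m ≤ C := by
  set M : ℕ → ℝ := fun m => max (y m) (y (m + 1))
  have hM0 : ∀ m, 0 ≤ M m := fun m => (hy m).trans (le_max_left _ _)
  have hM : ∀ m, M m ≤ M 0 * Real.exp (∑ i ∈ Finset.range m, ε i) := by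
    intro m
    induction m with
    | zero => simp
    | succ m ih =>
      have hstep : M (m + 1) ≤ (1 + ε m) * M m := by
        have h1 : y (m + 1) ≤ M m := le_max_right _ _
        have h0 : y m ≤ M m := le_max_left _ _
        refine max_le (by nlinarith [hε m, hy (m + 1)]) ?_
        nlinarith [hrec m, hε m]
      calc M (m + 1) ≤ Real.exp (ε m) * M m := by
            grw [hstep, ← Real.add_one_le_exp (ε m), add_comm]
            exact hM0 m
        _ ≤ Real.exp (ε m) * (M 0 * Real.exp (∑ i ∈ Finset.range m, ε i)) := by gcongr
        _ = M 0 * Real.exp (∑ i ∈ Finset.range (m + 1), ε i) := by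
            rw [Finset.sum_range_succ, Real.exp_add]; ring
  refine ⟨M 0 * Real.exp (∑' i, ε i), fun m => (le_max_left _ _).trans ((hM m).trans ?_)⟩
  gcongr
  · exact hM0 0
  · exact hεs.sum_le_tsum _ fun i _ => hε i

theorem summable_inv_mul_sqrt : Summable fun m : ℕ => (((m : ℝ) + 1) * √((m : ℝ) + 1))⁻¹ := by
  have h := Real.summable_nat_rpow_inv.2 (by norm_num : (1 : ℝ) < 3 / 2)
  refine ((summable_nat_add_iff 1).2 h).congr fun m => ?_
  push_cast
  rw [Real.sqrt_eq_rpow, ← Real.rpow_one_add' (by positivity) (by norm_num)]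
  norm_num

theorem summable_norm_sq_of_jacobi_recursion {a : ℕ → ℝ} {c : ℝ} {z : ℂ} {x : ℕ → ℂ}
    (ha : ∀ m, a m ≠ 0) (hconc : ∀ m, |a m| * |a (m + 2)| ≤ a (m + 1) ^ 2)
    (hratio : ∀ m, |a (m + 1)| ≤ c * |a m|) (hsum : Summable fun m => |a m|⁻¹)
    (hx : ∀ m, a (m + 1) * x (m + 2) + a m * x m = z * x (m + 1)) :
    Summable fun m => ‖x m‖ ^ 2 := by
  set b : ℕ → ℝ := fun m => |a m|
  have hb : ∀ m, 0 < b m := fun m => abs_pos.2 (ha m)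
  set y : ℕ → ℝ := fun m => √(b m) * ‖x m‖
  set ε : ℕ → ℝ := fun m => ‖z‖ * √c / b (m + 1)
  have hnorm : ∀ m, b (m + 1) * ‖x (m + 2)‖ ≤ ‖z‖ * ‖x (m + 1)‖ + b m * ‖x m‖ := by
    intro m
    have h := congrArg norm (eq_sub_of_add_eq (hx m))
    rw [norm_mul, Complex.norm_real] at h
    calc _ = _ := h
      _ ≤ _ := norm_sub_le _ _
      _ = _ := by rw [norm_mul, norm_mul, Complex.norm_real]; rfl
  -- Log-concavity of `|a|` makes the coefficient of `y m` at most `1`; the ratio bound makes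
  -- that of `y (m + 1)` comparable to `|a (m + 1)|⁻¹`, hence summable.
  have hrec : ∀ m, y (m + 2) ≤ y m + ε m * y (m + 1) := by
    intro m
    have hsq : √(b m) * √(b (m + 2)) ≤ b (m + 1) := by
      rw [← Real.sqrt_mul (hb m).le, ← Real.sqrt_sq (hb (m + 1)).le]
      exact Real.sqrt_le_sqrt (by simpa [b, sq_abs] using hconc m)
    have hsc : √(b (m + 2)) ≤ √c * √(b (m + 1)) := by
      rw [← Real.sqrt_mul' _ (hb (m + 1)).le]
      exact Real.sqrt_le_sqrt (hratio (m + 1))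
    have hbm : √(b m) * √(b m) = b m := Real.mul_self_sqrt (hb m).le
    rw [← mul_le_mul_iff_of_pos_left (hb (m + 1))]
    calc b (m + 1) * y (m + 2) = √(b (m + 2)) * (b (m + 1) * ‖x (m + 2)‖) := by ring
      _ ≤ √(b (m + 2)) * (‖z‖ * ‖x (m + 1)‖ + b m * ‖x m‖) := by gcongr; exact hnorm m
      _ = ‖z‖ * ‖x (m + 1)‖ * √(b (m + 2)) + (√(b m) * √(b (m + 2))) * y m := by
          linear_combination (√(b (m + 2)) * ‖x m‖) * hbm.symm
      _ ≤ ‖z‖ * ‖x (m + 1)‖ * (√c * √(b (m + 1))) + b (m + 1) * y m := by gcongr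
      _ = b (m + 1) * (y m + ε m * y (m + 1)) := by
          simp only [y, ε]; field_simp [(hb (m + 1)).ne']; ring
  have hεs : Summable ε := by
    simpa [ε, div_eq_mul_inv] using ((summable_nat_add_iff 1).2 hsum).mul_left (‖z‖ * √c)
  obtain ⟨C, hC⟩ := exists_forall_le_of_le_add_mul (fun m => by positivity)
    (fun m => div_nonneg (by positivity) (hb _).le) hεs hrec
  refine (hsum.mul_left (C ^ 2)).of_nonneg_of_le (fun m => by positivity) fun m => ?_
  have hbm : √(b m) ^ 2 = b m := Real.sq_sqrt (hb m).le
  rw [← div_eq_mul_inv, le_div_iff₀ (hb m)]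
  calc ‖x m‖ ^ 2 * b m = (√(b m) * ‖x m‖) ^ 2 := by rw [mul_pow, hbm, mul_comm]
    _ ≤ C ^ 2 := by gcongr; exact hC m

def jacobiSolution (a : ℕ → ℝ) (z : ℂ) : ℕ → ℂ
  | 0 => 1
  | 1 => z / a 0
  | m + 2 => (z * jacobiSolution a z (m + 1) - a m * jacobiSolution a z m) / a (m + 1)

theorem mul_jacobiSolution_one {a : ℕ → ℝ} (ha : a 0 ≠ 0) (z : ℂ) :
    a 0 * jacobiSolution a z 1 = z * jacobiSolution a z 0 := by
  simp [jacobiSolution, mul_div_cancel₀ _ (Complex.ofReal_ne_zero.2 ha)]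

theorem jacobiSolution_add_two {a : ℕ → ℝ} (z : ℂ) {m : ℕ} (ha : a (m + 1) ≠ 0) :
    a (m + 1) * jacobiSolution a z (m + 2) + a m * jacobiSolution a z m
      = z * jacobiSolution a z (m + 1) := by
  rw [jacobiSolution, mul_div_cancel₀ _ (Complex.ofReal_ne_zero.2 ha), sub_add_cancel]

theorem lp.dense_of_finite_support_subset {ι : Type*} {E : ι → Type*}
    [∀ i, NormedAddCommGroup (E i)] {p : ℝ≥0∞} [Fact (1 ≤ p)] (hp : p ≠ ⊤) {s : Set (lp E p)}
    (hs : ∀ f : lp E p, {i | f i ≠ 0}.Finite → f ∈ s) : Dense s := by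
  classical
  intro f
  refine mem_closure_of_tendsto (lp.hasSum_single hp f) (.of_forall fun t => hs _ ?_)
  refine t.finite_toSet.subset fun i hi => ?_
  by_contra hit
  refine hi ?_
  rw [lp.coeFn_sum, Finset.sum_apply]
  exact Finset.sum_eq_zero fun j hj => lp.single_apply_ne p j _ fun h => hit (h ▸ hj)

namespace Submodule

variable {𝕜 E F : Type*} [RCLike 𝕜] [NormedAddCommGroup E] [InnerProductSpace 𝕜 E]
  [NormedAddCommGroup F] [InnerProductSpace 𝕜 F]

theorem adjoint_topologicalClosure (g : Submodule 𝕜 (E × F)) :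
    g.topologicalClosure.adjoint = g.adjoint := by
  ext x
  simp only [mem_adjoint_iff]
  refine ⟨fun h a b hab => h a b (g.le_topologicalClosure hab), fun h a b hab => ?_⟩
  have hclosed : IsClosed {z : E × F | ⟪z.2, x.1⟫_𝕜 - ⟪z.1, x.2⟫_𝕜 = 0} :=
    isClosed_eq (by fun_prop) continuous_const
  rw [← SetLike.mem_coe, topologicalClosure_coe] at hab
  exact closure_minimal (fun z hz => h z.1 z.2 hz) hclosed hab

end Submodule

namespace LinearPMap

variable {𝕜 E F : Type*} [RCLike 𝕜] [NormedAddCommGroup E] [InnerProductSpace 𝕜 E]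
  [NormedAddCommGroup F] [InnerProductSpace 𝕜 F]

theorem not_finite_ker_sub_smul {A : E →ₗ.[𝕜] E} {z : 𝕜} {ι : Type*} [Infinite ι] (v : ι → E)
    (hv0 : ∀ i, v i ≠ 0) (horth : Pairwise fun i j => ⟪v i, v j⟫_𝕜 = 0)
    (hv : ∀ i, ∃ h : v i ∈ A.domain, A ⟨v i, h⟩ = z • v i) :
    ¬ Module.Finite 𝕜 (LinearMap.ker (A.toFun - z • A.domain.subtype)) := by
  choose hmem hval using hv
  let u : ι → LinearMap.ker (A.toFun - z • A.domain.subtype) := fun i =>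
    ⟨⟨v i, hmem i⟩, by simp [hval i]⟩
  intro
  have hli := linearIndependent_of_ne_zero_of_inner_eq_zero hv0 horth
  have := (LinearIndependent.of_comp (v := u)
    (A.domain.subtype ∘ₗ (LinearMap.ker (A.toFun - z • A.domain.subtype)).subtype) hli).finite
  exact not_finite ι

variable [CompleteSpace E]

theorem adjoint_closure {T : E →ₗ.[𝕜] F} (hT : Dense (T.domain : Set E)) : T.closure† = T† := by
  by_cases hc : T.IsClosable
  · have hT' : Dense (T.closure.domain : Set E) := hT.mono T.le_closure.1
    refine eq_of_eq_graph ?_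
    rw [adjoint_graph_eq_graph_adjoint hT', adjoint_graph_eq_graph_adjoint hT,
      ← hc.graph_closure_eq_closure_graph, Submodule.adjoint_topologicalClosure]
  · rw [closure_def' hc]

theorem _root_.IsSelfAdjoint.eq_zero_of_apply_eq_smul {A : E →ₗ.[𝕜] E} (hA : IsSelfAdjoint A)
    {z : 𝕜} (hz : conj z ≠ z) {x : A.domain} (hx : A x = z • (x : E)) : (x : E) = 0 := by
  have hsymm : A.IsFormalAdjoint A := by
    simpa only [isSelfAdjoint_def.mp hA] using adjoint_isFormalAdjoint hA.dense_domain
  have h := hsymm x x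
  rw [hx, inner_smul_left, inner_smul_right] at h
  exact inner_self_eq_zero.mp ((mul_eq_mul_right_iff.mp h).resolve_left hz)

end LinearPMap

theorem injective_succ_fst : Injective fun q : ℕ × ℕ => (q.1 + 1, q.2) :=
  fun _ _ h => by simpa [Prod.ext_iff] using h

theorem tsum_ite_fst_pred_eq_tsum_fst_succ {M : Type*} [AddCommMonoid M] [TopologicalSpace M]
    (F : ℕ × ℕ → ℕ × ℕ → M) :
    ∑' p : ℕ × ℕ, (if p.1 = 0 then 0 else F (p.1 - 1, p.2) p) =
      ∑' q : ℕ × ℕ, F q (q.1 + 1, q.2) := by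
  rw [← injective_succ_fst.tsum_eq]
  · simp
  · intro p hp
    have : p.1 ≠ 0 := fun h => hp (by simp [h])
    exact ⟨(p.1 - 1, p.2), Prod.ext (by simp; omega) rfl⟩

def jacobiUp (g : ℕ × ℕ → ℂ) (p : ℕ × ℕ) : ℂ := beta p.1 p.2 * g (p.1 + 1, p.2)

def jacobiDown (g : ℕ × ℕ → ℂ) (p : ℕ × ℕ) : ℂ :=
  if p.1 = 0 then 0 else beta (p.1 - 1) p.2 * g (p.1 - 1, p.2)

theorem jacobiAct_eq_add (g : ℕ × ℕ → ℂ) : jacobiAct g = jacobiUp g + jacobiDown g := rfl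

theorem hasFiniteSupport_jacobiUp {f : ℕ × ℕ → ℂ} (hf : f.HasFiniteSupport) :
    (jacobiUp f).HasFiniteSupport := by
  refine (hf.preimage injective_succ_fst.injOn).subset fun p hp => ?_
  exact support_mul_subset_right (fun p : ℕ × ℕ => (beta p.1 p.2 : ℂ))
    (fun p : ℕ × ℕ => f (p.1 + 1, p.2)) hp

theorem hasFiniteSupport_jacobiDown {f : ℕ × ℕ → ℂ} (hf : f.HasFiniteSupport) :
    (jacobiDown f).HasFiniteSupport := by
  refine (hf.image fun q : ℕ × ℕ => (q.1 + 1, q.2)).subset fun p hp => ?_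
  have h0 : p.1 ≠ 0 := fun h => hp (by simp [jacobiDown, h])
  refine ⟨(p.1 - 1, p.2), fun h => hp ?_, Prod.ext (by simp; omega) rfl⟩
  simp [jacobiDown, h0, h]

theorem tsum_conj_jacobiUp_mul (g f : ℕ × ℕ → ℂ) :
    ∑' p, conj (jacobiUp g p) * f p = ∑' p, conj (g p) * jacobiDown f p := by
  simp only [jacobiDown, mul_ite, mul_zero]
  rw [tsum_ite_fst_pred_eq_tsum_fst_succ (fun q p => conj (g p) * (beta q.1 q.2 * f q))]
  simp only [jacobiUp, map_mul, Complex.conj_ofReal]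
  exact tsum_congr fun p => by ring

theorem tsum_conj_jacobiDown_mul (g f : ℕ × ℕ → ℂ) :
    ∑' p, conj (jacobiDown g p) * f p = ∑' p, conj (g p) * jacobiUp f p := by
  simp only [jacobiDown, apply_ite conj, map_zero, ite_mul, zero_mul]
  rw [tsum_ite_fst_pred_eq_tsum_fst_succ (fun q p => conj (beta q.1 q.2 * g q) * f p)]
  simp only [jacobiUp, map_mul, Complex.conj_ofReal]
  exact tsum_congr fun p => by ring

theorem tsum_conj_jacobiAct_mul (g : ℕ × ℕ → ℂ) {f : ℕ × ℕ → ℂ} (hf : f.HasFiniteSupport) :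
    ∑' p, conj (jacobiAct g p) * f p = ∑' p, conj (g p) * jacobiAct f p := by
  have hs : ∀ u : ℕ × ℕ → ℂ, ∀ {v : ℕ × ℕ → ℂ}, v.HasFiniteSupport → Summable fun p => u p * v p :=
    fun u v hv => summable_of_hasFiniteSupport (hv.fun_mul_right u)
  simp only [jacobiAct_eq_add, Pi.add_apply, map_add, add_mul, mul_add]
  rw [(hs _ hf).tsum_add (hs _ hf),
    (hs _ (hasFiniteSupport_jacobiUp hf)).tsum_add (hs _ (hasFiniteSupport_jacobiDown hf)),
    tsum_conj_jacobiUp_mul, tsum_conj_jacobiDown_mul, add_comm]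

theorem exists_adjoint_apply_eq_of_jacobiAct {T : H2 →ₗ.[ℂ] H2} (hT : Dense (T.domain : Set H2))
    (hfin : ∀ f : T.domain, (⇑(f : H2)).HasFiniteSupport)
    (hact : ∀ f : T.domain, ∀ p : ℕ × ℕ, (T f : H2) p = jacobiAct (⇑(f : H2)) p)
    {g h : H2} (hgh : ⇑h = jacobiAct ⇑g) : ∃ hg : g ∈ T†.domain, T† ⟨g, hg⟩ = h := by
  have hinner : ∀ x : T.domain, ⟪h, (x : H2)⟫_ℂ = ⟪g, T x⟫_ℂ := by
    intro x
    simp only [lp.inner_eq_tsum, RCLike.inner_apply', hgh, hact x]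
    exact tsum_conj_jacobiAct_mul _ (hfin x)
  exact ⟨LinearPMap.mem_adjoint_domain_of_exists g ⟨h, hinner⟩,
    LinearPMap.adjoint_apply_eq hT _ hinner⟩

theorem abs_beta {m n : ℕ} (hn : 1 ≤ n) : |beta m n| = 1 / 2 * √((m : ℝ) + 1) * (m + n - 1) := by
  have : (1 : ℝ) ≤ n := by exact_mod_cast hn
  rw [beta, abs_of_nonpos (mul_nonpos_of_nonneg_of_nonpos (by positivity) (by linarith))]
  ring

theorem beta_ne_zero {m n : ℕ} (hn : 2 ≤ n) : beta m n ≠ 0 := by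
  have : (2 : ℝ) ≤ n := by exact_mod_cast hn
  rw [← abs_pos, abs_beta (by omega)]
  exact mul_pos (by positivity) (by linarith [m.cast_nonneg (α := ℝ)])

theorem abs_beta_mul_abs_beta_le {n : ℕ} (hn : 1 ≤ n) (m : ℕ) :
    |beta m n| * |beta (m + 2) n| ≤ beta (m + 1) n ^ 2 := by
  have hn' : (1 : ℝ) ≤ n := by exact_mod_cast hn
  have hs : (1 : ℝ) ≤ m + n := by linarith [m.cast_nonneg (α := ℝ)]
  rw [← sq_abs (beta (m + 1) n), abs_beta hn, abs_beta hn, abs_beta hn]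
  push_cast
  have hsqrt : √((m : ℝ) + 1) * √((m : ℝ) + 2 + 1) ≤ (m : ℝ) + 1 + 1 := by
    rw [← Real.sqrt_mul (by positivity), Real.sqrt_le_left (by positivity)]
    nlinarith
  rw [mul_pow, mul_pow, Real.sq_sqrt (by positivity)]
  calc 1 / 2 * √((m : ℝ) + 1) * (m + n - 1) * (1 / 2 * √((m : ℝ) + 2 + 1) * (m + 2 + n - 1))
      = 1 / 4 * (√((m : ℝ) + 1) * √((m : ℝ) + 2 + 1)) * (((m : ℝ) + n) ^ 2 - 1) := by ring
    _ ≤ 1 / 4 * ((m : ℝ) + 1 + 1) * ((m : ℝ) + n) ^ 2 := by gcongr <;> nlinarith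
    _ = _ := by ring

theorem abs_beta_succ_le {n : ℕ} (hn : 2 ≤ n) (m : ℕ) :
    |beta (m + 1) n| ≤ 4 * |beta m n| := by
  have : (2 : ℝ) ≤ n := by exact_mod_cast hn
  rw [abs_beta (by omega), abs_beta (by omega)]
  push_cast
  have hsqrt : √((m : ℝ) + 1 + 1) ≤ 2 * √((m : ℝ) + 1) := by
    rw [Real.sqrt_le_left (by positivity), mul_pow, Real.sq_sqrt (by positivity)]
    linarith
  calc 1 / 2 * √((m : ℝ) + 1 + 1) * (m + 1 + n - 1)
      ≤ 1 / 2 * (2 * √((m : ℝ) + 1)) * (2 * (m + n - 1)) := by gcongr <;> linarith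
    _ = _ := by ring

theorem summable_inv_abs_beta {n : ℕ} (hn : 2 ≤ n) : Summable fun m => |beta m n|⁻¹ := by
  refine (summable_inv_mul_sqrt.mul_left 2).of_nonneg_of_le (fun m => by positivity) fun m => ?_
  have : (2 : ℝ) ≤ n := by exact_mod_cast hn
  have hlow : ((m : ℝ) + 1) * √((m : ℝ) + 1) / 2 ≤ |beta m n| := by
    rw [abs_beta (by omega)]
    calc _ = 1 / 2 * √((m : ℝ) + 1) * (m + 1) := by ring
      _ ≤ _ := by gcongr; linarith
  calc |beta m n|⁻¹ ≤ (((m : ℝ) + 1) * √((m : ℝ) + 1) / 2)⁻¹ := inv_anti₀ (by positivity) hlow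
    _ = _ := by rw [inv_div, div_eq_mul_inv, mul_comm]

def columnSolution (z : ℂ) (n : ℕ) (p : ℕ × ℕ) : ℂ :=
  if p.2 = n then jacobiSolution (fun m => beta m n) z p.1 else 0

theorem jacobiAct_columnSolution {n : ℕ} (hn : 2 ≤ n) (z : ℂ) :
    jacobiAct (columnSolution z n) = z • columnSolution z n := by
  ext ⟨m, k⟩
  by_cases hk : k = n
  · subst hk
    rcases m with _ | m
    · simpa [jacobiAct, columnSolution] using
        mul_jacobiSolution_one (a := fun m => beta m k) (beta_ne_zero hn) z
    · have h := jacobiSolution_add_two (a := fun m => beta m k) z (m := m) (beta_ne_zero hn)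
      simp only [jacobiAct, columnSolution, ↓reduceIte, Nat.add_eq_zero_iff, one_ne_zero,
        and_false, add_tsub_cancel_right, Pi.smul_apply, smul_eq_mul]
      linear_combination h
  · simp [jacobiAct, columnSolution, hk]

theorem memℓp_columnSolution {n : ℕ} (hn : 2 ≤ n) (z : ℂ) : Memℓp (columnSolution z n) 2 := by
  have hcol : Injective fun m : ℕ => (m, n) := fun m m' h => (Prod.mk.inj h).1
  have hzero : ∀ p ∉ Set.range fun m : ℕ => (m, n),
      ‖columnSolution z n p‖ ^ (2 : ℝ≥0∞).toReal = 0 := by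
    intro p hp
    have : p.2 ≠ n := fun h => hp ⟨p.1, by rw [← h]⟩
    simp [columnSolution, this]
  rw [memℓp_gen_iff (by norm_num), ← hcol.summable_iff hzero]
  simp only [comp_def, columnSolution, if_pos, ENNReal.toReal_ofNat, Real.rpow_two]
  exact summable_norm_sq_of_jacobi_recursion (a := fun m => beta m n)
    (fun m => beta_ne_zero hn) (abs_beta_mul_abs_beta_le (by omega)) (abs_beta_succ_le hn)
    (summable_inv_abs_beta hn)
    fun m => jacobiSolution_add_two (a := fun m => beta m n) z (beta_ne_zero hn)

def deficiencyVector (z : ℂ) (j : ℕ) : H2 :=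
  ⟨columnSolution z (j + 2), memℓp_columnSolution (by omega) z⟩

theorem deficiencyVector_ne_zero (z : ℂ) (j : ℕ) : deficiencyVector z j ≠ 0 := by
  intro h
  have := congrArg (fun f : H2 => f (0, j + 2)) h
  simp [deficiencyVector, columnSolution, jacobiSolution] at this

theorem inner_deficiencyVector (z : ℂ) {i j : ℕ} (hij : i ≠ j) :
    ⟪deficiencyVector z i, deficiencyVector z j⟫_ℂ = 0 := by
  rw [lp.inner_eq_tsum]
  refine (tsum_congr fun p => ?_).trans tsum_zero
  by_cases h : p.2 = i + 2
  · have : p.2 ≠ j + 2 := by omega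
    simp [deficiencyVector, columnSolution, this]
  · simp [deficiencyVector, columnSolution, h]

/-- Both deficiency subspaces `ker(T* ∓ i)` of the Calvo–Picón operator `T` are
infinite-dimensional; in particular `T` is not essentially self-adjoint. -/
theorem deficiency_indices_of_CalvoPicon_T4_infinite
    (T : H2 →ₗ.[ℂ] H2)
    (hdom : ∀ f : H2, f ∈ T.domain ↔ {p : ℕ × ℕ | f p ≠ 0}.Finite)
    (hact : ∀ f : T.domain, ∀ p : ℕ × ℕ,
      (T f : H2) p = jacobiAct (⇑(f : H2)) p) :
    ¬ Module.Finite ℂ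
      (LinearMap.ker (T.adjoint.toFun - Complex.I • T.adjoint.domain.subtype)) ∧
    ¬ Module.Finite ℂ
      (LinearMap.ker (T.adjoint.toFun + Complex.I • T.adjoint.domain.subtype)) ∧
    ¬ IsSelfAdjoint T.closure := by
  have hdense : Dense (T.domain : Set H2) :=
    lp.dense_of_finite_support_subset (by norm_num) fun f hf => (hdom f).2 hf
  have heigen (z : ℂ) (j : ℕ) :
      ∃ h : deficiencyVector z j ∈ T†.domain, T† ⟨_, h⟩ = z • deficiencyVector z j :=
    exists_adjoint_apply_eq_of_jacobiAct hdense (fun f => (hdom f).1 f.2) hact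
      (by rw [lp.coeFn_smul]; exact (jacobiAct_columnSolution (by omega) z).symm)
  have hker (z : ℂ) : ¬ Module.Finite ℂ (LinearMap.ker (T†.toFun - z • T†.domain.subtype)) :=
    LinearPMap.not_finite_ker_sub_smul _ (deficiencyVector_ne_zero z)
      (fun _ _ => inner_deficiencyVector z) (heigen z)
  refine ⟨hker Complex.I, by rw [← sub_neg_eq_add, ← neg_smul]; exact hker _, fun hsa => ?_⟩
  have hT : T† = T.closure := (LinearPMap.adjoint_closure hdense).symm.trans hsa
  obtain ⟨_, hval⟩ := heigen Complex.I 0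
  exact deficiencyVector_ne_zero _ _
    ((hT ▸ hsa : IsSelfAdjoint T†).eq_zero_of_apply_eq_smul (by norm_num [Complex.ext_iff]) hval)
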